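/- Let Ω ⊆ ℝⁿ be a bounded open set and let σ : Ω → ℝ be measurable with essinf σ > 0 and esssup σ < ∞, and suppose either σ ≥ 1 almost everywhere or σ ≤ 1 almost everywhere. Let D = esssupp(σ − 1), assume m(D) > 0, let ρ ∈ ℝⁿ be a unit vector, and let t < h_D(ρ). Then there exists a measurable set S ⊆ D such that: (1) m(S) > 0; (2) there is ε₁ > 0 with x·ρ > t + ε₁ for all x ∈ S; (3) there is ε₂ > 0 such that either σ(x) > 1 + ε₂ for all x ∈ S, or σ(x) + ε₂ < 1 for all x ∈ S. -/

import Mathlib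

open MeasureTheory Filter Set
open scoped RealInnerProductSpace Topology

noncomputable section

/-- The closed half-space `H_{ρ,t} = {x ∈ ℝⁿ : x·ρ ≤ t}`. -/
def halfSpace {n : ℕ} (ρ : EuclideanSpace ℝ (Fin n)) (t : ℝ) :
    Set (EuclideanSpace ℝ (Fin n)) :=
  {x | ⟪x, ρ⟫ ≤ t}

/-- The essential support of a measurable function `f` on `Ω`: the set `Ω` minus the
union of all open sets `O ⊆ Ω` on which `f = 0` almost everywhere. -/
def essSupport {n : ℕ} (Ω : Set (EuclideanSpace ℝ (Fin n)))
    (f : EuclideanSpace ℝ (Fin n) → ℝ) : Set (EuclideanSpace ℝ (Fin n)) :=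
  Ω \ ⋃ O ∈ {O : Set (EuclideanSpace ℝ (Fin n)) |
      IsOpen O ∧ O ⊆ Ω ∧ volume {x ∈ O | f x ≠ 0} = 0}, O

/-- The essential convex support function `h_A(ρ) = inf {t ∈ ℝ : m(A \ H_{ρ,t}) = 0}`. -/
def essSuppFn {n : ℕ} (A : Set (EuclideanSpace ℝ (Fin n)))
    (ρ : EuclideanSpace ℝ (Fin n)) : ℝ :=
  sInf {t : ℝ | volume (A \ halfSpace ρ t) = 0}

/-!
Let `D = esssupp(σ - 1)` and choose `t < t' < h_D(ρ)`. Then `D \ H_{ρ,t'}` has positive measure,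
so the open set `Ω \ H_{ρ,t'}` meets `D` and hence `σ - 1` does not vanish a.e. on it. Since
`σ - 1` vanishes a.e. on `Ω \ D` (Lindelöf), `σ ≠ 1` on a subset of `D \ H_{ρ,t'}` of positive
measure. Exhausting that subset by the sets where `σ > 1 + 1/(k+1)` or `σ < 1 - 1/(k+1)` yields `S`.
-/

theorem MeasureTheory.exists_pos_margin_measure_ne_zero {α : Type*} [MeasurableSpace α]
    {μ : Measure α} {A : Set α} {g : α → ℝ} {c : ℝ} (h : μ {x ∈ A | g x ≠ c} ≠ 0) :
    ∃ ε > 0, μ {x ∈ A | c + ε < g x} ≠ 0 ∨ μ {x ∈ A | g x + ε < c} ≠ 0 := by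
  by_contra! H
  have hnull (k : ℕ) := H (1 / (k + 1)) Nat.one_div_pos_of_nat
  refine h (measure_mono_null ?_
    (measure_iUnion_null fun k => measure_union_null (hnull k).1 (hnull k).2))
  rintro x ⟨hxA, hx⟩
  rcases hx.lt_or_gt with hlt | hlt
  · obtain ⟨k, hk⟩ := exists_nat_one_div_lt (sub_pos.2 hlt)
    exact mem_iUnion.2 ⟨k, Or.inr ⟨hxA, by linarith⟩⟩
  · obtain ⟨k, hk⟩ := exists_nat_one_div_lt (sub_pos.2 hlt)
    exact mem_iUnion.2 ⟨k, Or.inl ⟨hxA, by linarith⟩⟩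

section HalfSpace

variable {n : ℕ} {ρ x : EuclideanSpace ℝ (Fin n)} {s t : ℝ}

theorem notMem_halfSpace : x ∉ halfSpace ρ t ↔ t < ⟪x, ρ⟫ := by
  rw [halfSpace, mem_ofPred_eq, not_le]

theorem isClosed_halfSpace : IsClosed (halfSpace ρ t) :=
  isClosed_le (continuous_id.inner continuous_const) continuous_const

theorem halfSpace_mono (h : s ≤ t) : halfSpace ρ s ⊆ halfSpace ρ t :=
  fun _ (hx : _ ≤ s) => hx.trans h

variable {A : Set (EuclideanSpace ℝ (Fin n))}

theorem bddBelow_setOf_volume_diff_halfSpace_eq_zero (hA : volume A ≠ 0) :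
    BddBelow {t | volume (A \ halfSpace ρ t) = 0} := by
  by_contra hbdd
  rw [not_bddBelow_iff] at hbdd
  have hcover : A ⊆ ⋃ k : ℕ, A \ halfSpace ρ (-k) := fun x hx => by
    obtain ⟨k, hk⟩ := exists_nat_gt (-⟪x, ρ⟫)
    exact mem_iUnion.2 ⟨k, hx, notMem_halfSpace.2 (by linarith)⟩
  refine hA (measure_mono_null hcover (measure_iUnion_null fun k => ?_))
  obtain ⟨s, hs, hsk⟩ := hbdd (-k)
  exact measure_mono_null (sdiff_subset_sdiff_right (halfSpace_mono hsk.le)) hs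

theorem volume_diff_halfSpace_ne_zero_of_lt_essSuppFn (hA : volume A ≠ 0)
    (ht : t < essSuppFn A ρ) : volume (A \ halfSpace ρ t) ≠ 0 :=
  fun h => (csInf_le (bddBelow_setOf_volume_diff_halfSpace_eq_zero hA) h).not_gt ht

end HalfSpace

section EssSupport

variable {n : ℕ} {Ω F : Set (EuclideanSpace ℝ (Fin n))} {f : EuclideanSpace ℝ (Fin n) → ℝ}

theorem essSupport_subset : essSupport Ω f ⊆ Ω := sdiff_subset

theorem measurableSet_essSupport (hΩ : MeasurableSet Ω) : MeasurableSet (essSupport Ω f) :=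
  hΩ.diff (isOpen_biUnion fun _ hO => hO.1).measurableSet

-- Lindelöf: the union of the open sets removed from `Ω` equals a countable subunion.
theorem volume_setOf_ne_zero_diff_essSupport :
    volume {x ∈ Ω \ essSupport Ω f | f x ≠ 0} = 0 := by
  obtain ⟨T, hTI, hTc, hTU⟩ := TopologicalSpace.isOpen_biUnion_countable
    {O | IsOpen O ∧ O ⊆ Ω ∧ volume {x ∈ O | f x ≠ 0} = 0} id fun _ hO => hO.1
  refine measure_mono_null (fun x ⟨hx, hfx⟩ => ?_)
    ((measure_biUnion_null_iff hTc).2 fun O hO => (hTI hO).2.2)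
  have hxT : x ∈ ⋃ O ∈ T, id O := by
    rw [hTU]
    by_contra h
    exact hx.2 ⟨hx.1, h⟩
  obtain ⟨O, hOT, hxO⟩ := mem_iUnion₂.1 hxT
  exact mem_iUnion₂.2 ⟨O, hOT, hxO, hfx⟩

-- Otherwise `Ω \ F` is one of the open sets removed from `Ω` in forming the essential support.
theorem volume_setOf_ne_zero_essSupport_diff_ne_zero (hΩ : IsOpen Ω) (hF : IsClosed F)
    (hne : (essSupport Ω f \ F).Nonempty) :
    volume {x ∈ essSupport Ω f \ F | f x ≠ 0} ≠ 0 := by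
  intro h0
  obtain ⟨x, hxD, hxF⟩ := hne
  have hnull : volume {y ∈ Ω \ F | f y ≠ 0} = 0 := by
    refine measure_mono_null (t := {y ∈ essSupport Ω f \ F | f y ≠ 0} ∪
        {y ∈ Ω \ essSupport Ω f | f y ≠ 0}) (fun y ⟨hy, hfy⟩ => ?_)
      (measure_union_null h0 volume_setOf_ne_zero_diff_essSupport)
    by_cases hyD : y ∈ essSupport Ω f
    · exact Or.inl ⟨⟨hyD, hy.2⟩, hfy⟩
    · exact Or.inr ⟨⟨hy.1, hyD⟩, hfy⟩
  exact hxD.2 (mem_iUnion₂.2 ⟨Ω \ F, ⟨hΩ.sdiff hF, sdiff_subset, hnull⟩, essSupport_subset hxD, hxF⟩)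

end EssSupport

theorem good_set_lemma_general {n : ℕ} (Ω : Set (EuclideanSpace ℝ (Fin n)))
    (hΩo : IsOpen Ω)
    (σ : EuclideanSpace ℝ (Fin n) → ℝ) (hσm : Measurable σ)
    (hD : 0 < volume (essSupport Ω (fun x => σ x - 1)))
    (ρ : EuclideanSpace ℝ (Fin n)) (t : ℝ)
    (ht : t < essSuppFn (essSupport Ω (fun x => σ x - 1)) ρ) :
    ∃ S : Set (EuclideanSpace ℝ (Fin n)), MeasurableSet S ∧
      S ⊆ essSupport Ω (fun x => σ x - 1) ∧
      0 < volume S ∧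
      (∃ ε₁ : ℝ, 0 < ε₁ ∧ ∀ x ∈ S, t + ε₁ < ⟪x, ρ⟫) ∧
      (∃ ε₂ : ℝ, 0 < ε₂ ∧ ((∀ x ∈ S, 1 + ε₂ < σ x) ∨ (∀ x ∈ S, σ x + ε₂ < 1))) := by
  set D := essSupport Ω (fun x => σ x - 1)
  obtain ⟨t', htt', ht'⟩ := exists_between ht
  have hA : volume (D \ halfSpace ρ t') ≠ 0 :=
    volume_diff_halfSpace_ne_zero_of_lt_essSuppFn hD.ne' ht'
  have hAm : MeasurableSet (D \ halfSpace ρ t') :=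
    (measurableSet_essSupport hΩo.measurableSet).diff isClosed_halfSpace.measurableSet
  have hσA : volume {x ∈ D \ halfSpace ρ t' | σ x ≠ 1} ≠ 0 := by
    simpa only [sub_ne_zero] using volume_setOf_ne_zero_essSupport_diff_ne_zero hΩo
      isClosed_halfSpace (nonempty_of_measure_ne_zero hA)
  have hε₁ : ∀ x ∈ D \ halfSpace ρ t', t + (t' - t) < ⟪x, ρ⟫ := fun x hx => by
    simpa only [add_sub_cancel] using notMem_halfSpace.1 hx.2
  obtain ⟨ε, hε, hS | hS⟩ := exists_pos_margin_measure_ne_zero hσA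
  · exact ⟨_, hAm.inter (measurableSet_lt measurable_const hσm), fun x hx => hx.1.1,
      pos_iff_ne_zero.2 hS, ⟨t' - t, sub_pos.2 htt', fun x hx => hε₁ x hx.1⟩,
      ε, hε, Or.inl fun x hx => hx.2⟩
  · exact ⟨_, hAm.inter (measurableSet_lt (hσm.add_const ε) measurable_const), fun x hx => hx.1.1,
      pos_iff_ne_zero.2 hS, ⟨t' - t, sub_pos.2 htt', fun x hx => hε₁ x hx.1⟩,
      ε, hε, Or.inr fun x hx => hx.2⟩

/-- The good-set lemma: if `σ ∈ L^∞_+(Ω)`, `σ ≥ 1` a.e. or `σ ≤ 1` a.e.,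
`D = esssupp(σ − 1)` has positive measure and `t < h_D(ρ)`, then there is a measurable
set `S ⊆ D` of positive measure on which `x·ρ > t + ε₁` and on which either
`σ > 1 + ε₂` or `σ + ε₂ < 1`, for some `ε₁, ε₂ > 0`. -/
theorem good_set_lemma {n : ℕ} (Ω : Set (EuclideanSpace ℝ (Fin n)))
    (hΩo : IsOpen Ω) (hΩb : Bornology.IsBounded Ω)
    (σ : EuclideanSpace ℝ (Fin n) → ℝ) (hσm : Measurable σ)
    (hlb : ∃ c : ℝ, 0 < c ∧ ∀ᵐ x ∂(volume.restrict Ω), c ≤ σ x)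
    (hub : ∃ C : ℝ, ∀ᵐ x ∂(volume.restrict Ω), σ x ≤ C)
    (hsign : (∀ᵐ x ∂(volume.restrict Ω), 1 ≤ σ x) ∨ (∀ᵐ x ∂(volume.restrict Ω), σ x ≤ 1))
    (hD : 0 < volume (essSupport Ω (fun x => σ x - 1)))
    (ρ : EuclideanSpace ℝ (Fin n)) (hρ : ‖ρ‖ = 1) (t : ℝ)
    (ht : t < essSuppFn (essSupport Ω (fun x => σ x - 1)) ρ) :
    ∃ S : Set (EuclideanSpace ℝ (Fin n)), MeasurableSet S ∧
      S ⊆ essSupport Ω (fun x => σ x - 1) ∧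
      0 < volume S ∧
      (∃ ε₁ : ℝ, 0 < ε₁ ∧ ∀ x ∈ S, t + ε₁ < ⟪x, ρ⟫) ∧
      (∃ ε₂ : ℝ, 0 < ε₂ ∧ ((∀ x ∈ S, 1 + ε₂ < σ x) ∨ (∀ x ∈ S, σ x + ε₂ < 1))) :=
  good_set_lemma_general Ω hΩo σ hσm hD ρ t ht
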